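/- arXiv:1810.01167 — 2 statements merged into one kernel-verified Lean document; each statement's English description precedes it below -/
import Mathlib

section
/- Let (X,d) be a compact connected metric space and F = {f₁,…,f_k} a finite family of continuous surjective self-maps of X, with iterates ω_n as below and f = f_k∘f_{k-1}∘⋯∘f₁. Then the non-autonomous system (X,F) is minimal (every point x∈X has dense orbit {ω_n(x) : n∈ℕ}) if and only if the autonomous system (X,f) is minimal (every point x∈X has dense orbit {fⁿ(x) : n∈ℕ}). -/
/-!
Write `g = ω_{k+1}`. If `(X, F)` is minimal, then for every nonempty closed `g`-invariant set `B`
the sets `ω_t '' B`, `t ≤ k`, cover `X`, so by Baire some `ω_t '' Q` has interior when `Q` is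
`g`-minimal. Since `ω_t x = ω_t q` forces `g x = g q`, a neighbourhood of any point is sent into a
minimal set by some power of `g`: take `Q` inside the orbit closure of the point and wait until
`ω_t ∘ gᵐ` enters that interior. By compactness one power `g^T` maps `X` into finitely many
minimal sets, and as `g` is onto, `X` is their union. Distinct minimal sets are disjoint, so each
of them is clopen and connectedness makes `X` itself minimal. The converse holds because
`gⁿ x = ω_{n(k+1)} x`.
-/

open Filter Metric Set Function

open Topology

/-- The `n`-th iterate `ω_n` of the non-autonomous system generated by the finite family
`f 0, f 1, …, f k` applied cyclically: `ω_0 = id` and `ω_{n+1} = f (n % (k+1)) ∘ ω_n`,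
so that `ω_n = f_{((n-1) mod (k+1)) + 1} ∘ ⋯ ∘ f_2 ∘ f_1` in the paper's (1-based) notation.
The induced autonomous map `f = f_k ∘ ⋯ ∘ f_1` is `omegaIt f (k+1)`. -/
def omegaIt {X : Type*} {k : ℕ} (f : Fin (k + 1) → X → X) : ℕ → X → X
  | 0 => id
  | n + 1 => fun x => f ⟨n % (k + 1), Nat.mod_lt _ (Nat.succ_pos k)⟩ (omegaIt f n x)

def IsMinimalSet {X : Type*} [TopologicalSpace X] (g : X → X) (Q : Set X) : Prop :=
  Minimal (fun B : Set X => B.Nonempty ∧ IsClosed B ∧ MapsTo g B B) Q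

section Dynamics

variable {X : Type*} [TopologicalSpace X] {g : X → X}

theorem mapsTo_closure_range_iterate (hg : Continuous g) (x : X) :
    MapsTo g (closure (range fun n => g^[n] x)) (closure (range fun n => g^[n] x)) :=
  MapsTo.closure (fun _ ⟨n, hn⟩ => ⟨n + 1, by subst hn; exact iterate_succ_apply' g n x⟩) hg

namespace IsMinimalSet

variable {Q Q' : Set X}

theorem nonempty (hQ : IsMinimalSet g Q) : Q.Nonempty := hQ.prop.1

theorem isClosed (hQ : IsMinimalSet g Q) : IsClosed Q := hQ.prop.2.1

theorem mapsTo (hQ : IsMinimalSet g Q) : MapsTo g Q Q := hQ.prop.2.2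

theorem exists_subset [CompactSpace X] {A : Set X} (hA : A.Nonempty) (hAc : IsClosed A)
    (hAg : MapsTo g A A) : ∃ Q ⊆ A, IsMinimalSet g Q := by
  refine zorn_superset_nonempty _ (fun c hcS hchain hcne => ?_) A ⟨hA, hAc, hAg⟩
  have hc : ∀ B ∈ c, IsClosed B := fun B hB => (hcS hB).2.1
  have : Nonempty c := hcne.to_subtype
  have hdir : DirectedOn (· ⊇ ·) c := fun a ha b hb =>
    (hchain.total ha hb).elim (fun h => ⟨a, ha, subset_rfl, h⟩) fun h => ⟨b, hb, h, subset_rfl⟩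
  refine ⟨⋂₀ c, ⟨?_, isClosed_sInter hc, ?_⟩, fun B hB => sInter_subset_of_mem hB⟩
  · exact IsCompact.nonempty_sInter_of_directed_nonempty_isCompact_isClosed hdir
      (fun B hB => (hcS hB).1) (fun B hB => (hc B hB).isCompact) hc
  · exact fun x hx B hB => (hcS hB).2.2 (hx B hB)

theorem eq_of_inter_nonempty (hQ : IsMinimalSet g Q) (hQ' : IsMinimalSet g Q')
    (hne : (Q ∩ Q').Nonempty) : Q = Q' := by
  have hinter : (Q ∩ Q').Nonempty ∧ IsClosed (Q ∩ Q') ∧ MapsTo g (Q ∩ Q') (Q ∩ Q') :=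
    ⟨hne, hQ.isClosed.inter hQ'.isClosed, hQ.mapsTo.inter_inter hQ'.mapsTo⟩
  rw [← hQ.eq_of_subset hinter inter_subset_left, hQ'.eq_of_subset hinter inter_subset_right]

theorem dense_range_iterate (h : IsMinimalSet g univ) (hg : Continuous g) (x : X) :
    Dense (range fun n => g^[n] x) :=
  dense_iff_closure_eq.2 <| h.eq_of_subset
    ⟨⟨x, subset_closure ⟨0, rfl⟩⟩, isClosed_closure, mapsTo_closure_range_iterate hg x⟩
    (subset_univ _)

end IsMinimalSet

theorem exists_finite_isMinimalSet_cover [CompactSpace X] (hg : Surjective g)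
    (h : ∀ x, ∃ U ∈ 𝓝 x, ∃ Q, IsMinimalSet g Q ∧ ∃ n, MapsTo g^[n] U Q) :
    ∃ S : Set (Set X), S.Finite ∧ (∀ Q ∈ S, IsMinimalSet g Q) ∧ ⋃₀ S = univ := by
  choose U hU Q hQ n hn using h
  obtain ⟨t, ht⟩ := CompactSpace.elim_nhds_subcover U hU
  refine ⟨Q '' t, t.finite_toSet.image Q, forall_mem_image.2 fun x _ => hQ x,
    eq_univ_of_forall fun y => ?_⟩
  obtain ⟨z, rfl⟩ := hg.iterate (t.sup n) y
  obtain ⟨x, hxt, hzx⟩ := mem_iUnion₂.1 (ht ▸ mem_univ z : z ∈ ⋃ x ∈ t, U x)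
  refine ⟨Q x, mem_image_of_mem Q hxt, ?_⟩
  rw [← Nat.sub_add_cancel (Finset.le_sup hxt : n x ≤ t.sup n), iterate_add_apply]
  exact (hQ x).mapsTo.iterate _ (hn x hzx)

theorem isMinimalSet_univ_of_sUnion_eq_univ [ConnectedSpace X] {S : Set (Set X)}
    (hS : S.Finite) (hSg : ∀ Q ∈ S, IsMinimalSet g Q) (hcover : ⋃₀ S = univ) :
    IsMinimalSet g univ := by
  obtain ⟨Q, hQS, -⟩ := mem_sUnion.1 (hcover ▸ mem_univ (Classical.arbitrary X) :
    Classical.arbitrary X ∈ ⋃₀ S)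
  have hcompl : Qᶜ = ⋃ P ∈ S \ {Q}, P := by
    ext z
    simp only [mem_compl_iff, mem_iUnion₂, Set.mem_sdiff, mem_singleton_iff, exists_prop]
    constructor
    · intro hz
      obtain ⟨P, hPS, hzP⟩ := mem_sUnion.1 (hcover ▸ mem_univ z : z ∈ ⋃₀ S)
      exact ⟨P, ⟨hPS, by rintro rfl; exact hz hzP⟩, hzP⟩
    · rintro ⟨P, ⟨hPS, hPQ⟩, hzP⟩ hzQ
      exact hPQ ((hSg P hPS).eq_of_inter_nonempty (hSg Q hQS) ⟨z, hzP, hzQ⟩)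
  have hopen : IsOpen Q := by
    rw [← isClosed_compl_iff, hcompl]
    exact hS.sdiff.isClosed_biUnion fun P hP => (hSg P hP.1).isClosed
  rw [← IsClopen.eq_univ ⟨(hSg Q hQS).isClosed, hopen⟩ (hSg Q hQS).nonempty]
  exact hSg Q hQS

end Dynamics

section Cyclic

variable {X : Type*} {k : ℕ} (f : Fin (k + 1) → X → X)

theorem continuous_omegaIt [TopologicalSpace X] (hc : ∀ i, Continuous (f i)) :
    ∀ n, Continuous (omegaIt f n)
  | 0 => continuous_id
  | n + 1 => (hc _).comp (continuous_omegaIt hc n)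

theorem surjective_omegaIt (hs : ∀ i, Surjective (f i)) : ∀ n, Surjective (omegaIt f n)
  | 0 => surjective_id
  | n + 1 => (hs _).comp (surjective_omegaIt hs n)

theorem omegaIt_mul_add (m t : ℕ) (x : X) :
    omegaIt f ((k + 1) * m + t) x = omegaIt f t (omegaIt f ((k + 1) * m) x) := by
  induction t with
  | zero => rfl
  | succ t ih =>
    show f _ (omegaIt f ((k + 1) * m + t) x) = f _ (omegaIt f t (omegaIt f ((k + 1) * m) x))
    rw [ih]
    congr 2
    simp

theorem omegaIt_mul (m : ℕ) (x : X) :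
    omegaIt f ((k + 1) * m) x = (omegaIt f (k + 1))^[m] x := by
  induction m with
  | zero => rfl
  | succ m ih => rw [Nat.mul_succ, omegaIt_mul_add, ih, iterate_succ_apply']

theorem omegaIt_eq_mod_iterate (n : ℕ) (x : X) :
    omegaIt f n x = omegaIt f (n % (k + 1)) ((omegaIt f (k + 1))^[n / (k + 1)] x) := by
  conv_lhs => rw [← Nat.div_add_mod n (k + 1)]
  rw [omegaIt_mul_add, omegaIt_mul]

theorem omegaIt_eq_of_le {s t : ℕ} (hst : s ≤ t) {x y : X}
    (h : omegaIt f s x = omegaIt f s y) : omegaIt f t x = omegaIt f t y := by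
  induction t, hst using Nat.le_induction with
  | base => exact h
  | succ t _ ih => exact congrArg (f _) ih

theorem omegaIt_mem_of_omegaIt_mem_image {t : ℕ} (ht : t ≤ k + 1) {Q : Set X}
    (hQ : MapsTo (omegaIt f (k + 1)) Q Q) {y : X} (hy : omegaIt f t y ∈ omegaIt f t '' Q) :
    omegaIt f (k + 1) y ∈ Q := by
  obtain ⟨q, hq, hqy⟩ := hy
  rw [← omegaIt_eq_of_le f ht hqy]
  exact hQ hq

variable [TopologicalSpace X] [CompactSpace X] [T2Space X] {f}

theorem iUnion_image_omegaIt_eq_univ (hc : ∀ i, Continuous (f i))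
    (hF : ∀ x, Dense (range fun n => omegaIt f n x)) {B : Set X} (hB : B.Nonempty)
    (hBc : IsClosed B) (hBg : MapsTo (omegaIt f (k + 1)) B B) :
    ⋃ t : Fin (k + 1), omegaIt f t '' B = univ := by
  obtain ⟨w, hw⟩ := hB
  have hclosed : IsClosed (⋃ t : Fin (k + 1), omegaIt f t '' B) := isClosed_iUnion_of_finite
    fun t => (hBc.isCompact.image (continuous_omegaIt f hc t)).isClosed
  refine eq_univ_of_univ_subset <| (hF w).closure_eq ▸ hclosed.closure_subset_iff.2 ?_
  rintro _ ⟨n, rfl⟩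
  exact mem_iUnion.2 ⟨⟨n % (k + 1), Nat.mod_lt _ k.succ_pos⟩, _, hBg.iterate _ hw,
    (omegaIt_eq_mod_iterate f n w).symm⟩

theorem exists_nhds_mapsTo_isMinimalSet (hc : ∀ i, Continuous (f i))
    (hF : ∀ x, Dense (range fun n => omegaIt f n x)) (x : X) :
    ∃ U ∈ 𝓝 x, ∃ Q, IsMinimalSet (omegaIt f (k + 1)) Q ∧
      ∃ n, MapsTo (omegaIt f (k + 1))^[n] U Q := by
  set g := omegaIt f (k + 1)
  have hg : Continuous g := continuous_omegaIt f hc _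
  obtain ⟨Q, hQx, hQ⟩ := IsMinimalSet.exists_subset (A := closure (range fun n => g^[n] x))
    ⟨x, subset_closure ⟨0, rfl⟩⟩ isClosed_closure (mapsTo_closure_range_iterate hg x)
  have : Nonempty X := ⟨x⟩
  obtain ⟨t, v, hv⟩ := nonempty_interior_of_iUnion_of_closed
    (fun t : Fin (k + 1) => (hQ.isClosed.isCompact.image (continuous_omegaIt f hc t)).isClosed)
    (iUnion_image_omegaIt_eq_univ hc hF hQ.nonempty hQ.isClosed hQ.mapsTo)
  have hv' : v ∈ closure (range fun m => omegaIt f t (g^[m] x)) := by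
    have := image_closure_subset_closure_image (continuous_omegaIt f hc t)
      (image_mono hQx (interior_subset hv))
    rwa [← range_comp] at this
  obtain ⟨_, hmv, m, rfl⟩ := mem_closure_iff.1 hv' _ isOpen_interior hv
  refine ⟨(omegaIt f t ∘ g^[m]) ⁻¹' interior (omegaIt f t '' Q),
    (isOpen_interior.preimage ((continuous_omegaIt f hc t).comp (hg.iterate m))).mem_nhds hmv,
    Q, hQ, m + 1, fun y hy => ?_⟩
  rw [iterate_succ_apply']
  exact omegaIt_mem_of_omegaIt_mem_image f t.is_lt.le hQ.mapsTo (interior_subset hy)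

end Cyclic

/-- for connected `X`, the non-autonomous system `(X, F)` is minimal iff the
autonomous system `(X, f)`, `f = f_k ∘ ⋯ ∘ f_1`, is minimal. -/
theorem minimal_nonautonomous_iff_autonomous
    {X : Type*} [MetricSpace X] [CompactSpace X] [ConnectedSpace X]
    {k : ℕ} (f : Fin (k + 1) → X → X)
    (hc : ∀ i, Continuous (f i)) (hs : ∀ i, Function.Surjective (f i)) :
    (∀ x : X, Dense (Set.range fun n : ℕ => omegaIt f n x)) ↔
    (∀ x : X, Dense (Set.range fun n : ℕ => (omegaIt f (k + 1))^[n] x)) := by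
  constructor
  · intro hF
    obtain ⟨S, hSfin, hSmin, hScover⟩ := exists_finite_isMinimalSet_cover
      (surjective_omegaIt f hs (k + 1)) (exists_nhds_mapsTo_isMinimalSet hc hF)
    exact (isMinimalSet_univ_of_sUnion_eq_univ hSfin hSmin hScover).dense_range_iterate
      (continuous_omegaIt f hc (k + 1))
  · intro hg x
    exact (hg x).mono (range_subset_iff.2 fun m => ⟨(k + 1) * m, omegaIt_mul f m x⟩)
end

section
/- Let (X,d) be a compact metric space and F = {f₁,…,f_k} a finite family of continuous surjective self-maps of X, with iterates ω_n as below and f = f_k∘f_{k-1}∘⋯∘f₁. Then the non-autonomous system (X,F) is sensitive (there exists δ>0 such that for every x∈X and every neighborhood U of x there exists n∈ℕ with diam(ω_n(U)) > δ) if and only if the autonomous system (X,f) is sensitive (there exists δ>0 such that for every x∈X and every neighborhood U of x there exists n∈ℕ with diam(fⁿ(U)) > δ). The sensitivity constants for the two systems may differ. -/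
open Filter Metric Set Function

lemma omegaIt_continuous {X : Type*} [MetricSpace X] {k : ℕ}
    (f : Fin (k + 1) → X → X) (hc : ∀ i, Continuous (f i)) (n : ℕ) :
    Continuous (omegaIt f n) := by
  induction n with
  | zero => exact continuous_id
  | succ n ih => exact (hc _).comp ih

lemma omegaIt_base_add {X : Type*} {k : ℕ} (f : Fin (k + 1) → X → X) (n : ℕ) :
    omegaIt f ((k + 1) + n) = omegaIt f n ∘ omegaIt f (k + 1) := by
  induction n with
  | zero => simp [omegaIt]
  | succ n ih =>
    have h : (k + 1) + (n + 1) = ((k + 1) + n) + 1 := rfl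
    funext x
    rw [h]
    simp only [omegaIt, ih, comp_apply, Nat.add_mod_left]

lemma omegaIt_mul_add_s7 {X : Type*} {k : ℕ} (f : Fin (k + 1) → X → X) (q : ℕ) :
    ∀ n, omegaIt f ((k + 1) * q + n) = omegaIt f n ∘ (omegaIt f (k + 1))^[q] := by
  induction q with
  | zero => simp
  | succ q ih =>
    intro n
    have h : (k + 1) * (q + 1) + n = (k + 1) * q + ((k + 1) + n) := by ring
    rw [h, ih, omegaIt_base_add, Function.iterate_succ']
    rfl

/-- the non-autonomous system `(X, F)` is sensitive iff the autonomous system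
`(X, f)`, `f = f_k ∘ ⋯ ∘ f_1`, is sensitive (possibly with different constants). -/
theorem sensitive_nonautonomous_iff_autonomous
    {X : Type*} [MetricSpace X] [CompactSpace X] {k : ℕ} (f : Fin (k + 1) → X → X)
    (hc : ∀ i, Continuous (f i)) (hs : ∀ i, Function.Surjective (f i)) :
    (∃ δ > (0 : ℝ), ∀ x : X, ∀ U ∈ nhds x, ∃ n : ℕ,
        δ < Metric.diam (omegaIt f n '' U)) ↔
    (∃ δ > (0 : ℝ), ∀ x : X, ∀ U ∈ nhds x, ∃ n : ℕ,
        δ < Metric.diam ((omegaIt f (k + 1))^[n] '' U)) := by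
  constructor
  · rintro ⟨δ, hδ, hsen⟩
    -- uniform continuity of all `ω_r`, `r ≤ k`, simultaneously
    set g : X → (Fin (k + 1) → X) := fun x i => omegaIt f i.1 x with hg
    have hgc : Continuous g := continuous_pi fun i => omegaIt_continuous f hc i.1
    have hguc : UniformContinuous g := CompactSpace.uniformContinuous_of_continuous hgc
    obtain ⟨ε, hε, hεδ⟩ := Metric.uniformContinuous_iff.mp hguc δ hδ
    refine ⟨ε / 2, by linarith, fun x U hU => ?_⟩
    by_contra hcon
    push_neg at hcon
    obtain ⟨n, hn⟩ := hsen x U hU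
    -- decompose `n = (k+1)q + r`
    have hdec : n = (k + 1) * (n / (k + 1)) + n % (k + 1) := (Nat.div_add_mod n (k + 1)).symm
    set q := n / (k + 1)
    set r := n % (k + 1)
    have hr : r < k + 1 := Nat.mod_lt _ (Nat.succ_pos k)
    have himg : omegaIt f n '' U = omegaIt f r '' ((omegaIt f (k + 1))^[q] '' U) := by
      rw [hdec, omegaIt_mul_add_s7, Set.image_comp]
    have hdiam : Metric.diam (omegaIt f n '' U) ≤ δ := by
      rw [himg]
      apply Metric.diam_le_of_forall_dist_le (le_of_lt hδ)
      rintro a ⟨a', ha', rfl⟩ b ⟨b', hb', rfl⟩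
      have hab : dist a' b' < ε := by
        have := Metric.dist_le_diam_of_mem ?_ ha' hb'
        · linarith [hcon q]
        · exact (IsCompact.image isCompact_univ
            ((omegaIt_continuous f hc (k + 1)).iterate q)).isBounded.subset
            (by rw [Set.image_univ]; exact (Set.image_subset_range _ _))
      have := hεδ hab
      have hcoord : dist (omegaIt f r a') (omegaIt f r b') ≤ dist (g a') (g b') :=
        dist_le_pi_dist (g a') (g b') ⟨r, hr⟩
      linarith
    linarith
  · rintro ⟨δ, hδ, hsen⟩
    refine ⟨δ, hδ, fun x U hU => ?_⟩
    obtain ⟨n, hn⟩ := hsen x U hU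
    refine ⟨(k + 1) * n, ?_⟩
    have : omegaIt f ((k + 1) * n) = (omegaIt f (k + 1))^[n] := by
      have := omegaIt_mul_add_s7 f n 0
      simpa [omegaIt] using this
    rwa [this]
end
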